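/- arXiv:0707.4203 — 3 statements merged into one kernel-verified Lean document; each statement's English description precedes it below -/
import Mathlib

section
/- (Spectral norm.) Assume the N×d real matrix Φ satisfies the Restricted Isometry Condition with parameters (2n, ε), ε ∈ (0,1). Then for every vector z ∈ ℝ^N and every index set I ⊆ {1,…,d} with |I| ≤ 2n, one has ‖(Φ*z)|_I‖₂ ≤ (1+ε)‖z‖₂. -/
open Finset

noncomputable section

/-- A vector `v ∈ ℝ^d` is `m`-sparse if its support has at most `m` elements. -/
def msparse {d : ℕ} (m : ℕ) (v : EuclideanSpace ℝ (Fin d)) : Prop :=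
  (Finset.univ.filter fun i => v i ≠ 0).card ≤ m

/-- The Restricted Isometry Condition with parameters `(m, ε)`. -/
def RIC {N d : ℕ} (Φ : Matrix (Fin N) (Fin d) ℝ) (m : ℕ) (ε : ℝ) : Prop :=
  ∀ v : EuclideanSpace ℝ (Fin d), msparse m v →
    (1 - ε) * ‖v‖ ≤ ‖Matrix.toEuclideanLin Φ v‖ ∧
    ‖Matrix.toEuclideanLin Φ v‖ ≤ (1 + ε) * ‖v‖

/-- The support of a vector, as a `Finset`. -/
def suppF {d : ℕ} (v : EuclideanSpace ℝ (Fin d)) : Finset (Fin d) :=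
  Finset.univ.filter fun i => v i ≠ 0

/-- `restr S w = w|_S`: the vector equal to `w` on `S` and zero elsewhere. -/
def restr {d : ℕ} (S : Finset (Fin d)) (w : EuclideanSpace ℝ (Fin d)) :
    EuclideanSpace ℝ (Fin d) :=
  WithLp.toLp 2 (fun i => if i ∈ S then w i else 0)

/-- `colSpan Φ S = range(Φ_S)`: the span of the columns of `Φ` indexed by `S`. -/
def colSpan {N d : ℕ} (Φ : Matrix (Fin N) (Fin d) ℝ) (S : Finset (Fin d)) :
    Submodule ℝ (EuclideanSpace ℝ (Fin N)) :=
  Submodule.span ℝ ((fun j => (WithLp.toLp 2 (fun i => Φ i j) : EuclideanSpace ℝ (Fin N))) '' (S : Set (Fin d)))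

/-!
Let `v = (Φ*z)|_I`. Since `v` agrees with `Φ*z` on its support, `‖v‖² = ⟪v, Φ*z⟫ = ⟪Φv, z⟫`,
and `v` is `2n`-sparse, so RIC and Cauchy–Schwarz give `‖v‖² ≤ (1+ε)‖v‖‖z‖`.
-/

open scoped InnerProductSpace Matrix

section Adjoint

variable {E F : Type*} [NormedAddCommGroup E] [InnerProductSpace ℝ E] [FiniteDimensional ℝ E]
  [NormedAddCommGroup F] [InnerProductSpace ℝ F] [FiniteDimensional ℝ F]

theorem norm_le_mul_norm_of_inner_adjoint_eq_norm_sq {A : E →ₗ[ℝ] F} {x : E} {z : F} {C : ℝ}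
    (hC : 0 ≤ C) (hx : ⟪x, A.adjoint z⟫_ℝ = ‖x‖ ^ 2) (hAx : ‖A x‖ ≤ C * ‖x‖) :
    ‖x‖ ≤ C * ‖z‖ := by
  have hsq : ‖x‖ * ‖x‖ ≤ ‖x‖ * (C * ‖z‖) :=
    calc ‖x‖ * ‖x‖ = ⟪A x, z⟫_ℝ := by rw [← LinearMap.adjoint_inner_right, hx, sq]
      _ ≤ ‖A x‖ * ‖z‖ := real_inner_le_norm _ _
      _ ≤ C * ‖x‖ * ‖z‖ := by gcongr
      _ = ‖x‖ * (C * ‖z‖) := by ring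
  rcases (norm_nonneg x).eq_or_lt with hx0 | hx0
  · rw [← hx0]; positivity
  · exact le_of_mul_le_mul_left hsq hx0

end Adjoint

theorem msparse_restr {d m : ℕ} {I : Finset (Fin d)} (hI : I.card ≤ m)
    (w : EuclideanSpace ℝ (Fin d)) : msparse m (restr I w) := by
  refine (Finset.card_le_card fun i hi => ?_).trans hI
  by_contra h
  simp [restr, h] at hi

theorem inner_restr_self {d : ℕ} (I : Finset (Fin d)) (w : EuclideanSpace ℝ (Fin d)) :
    ⟪restr I w, w⟫_ℝ = ‖restr I w‖ ^ 2 := by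
  rw [← real_inner_self_eq_norm_sq]
  simp only [PiLp.inner_apply, RCLike.inner_apply, conj_trivial]
  refine Finset.sum_congr rfl fun i _ => ?_
  by_cases h : i ∈ I <;> simp [restr, h]

theorem Matrix.toEuclideanLin_transpose_eq_adjoint {m n : Type*} [Fintype m] [Fintype n]
    [DecidableEq m] [DecidableEq n] (A : Matrix m n ℝ) :
    Matrix.toEuclideanLin Aᵀ = (Matrix.toEuclideanLin A).adjoint := by
  rw [← Matrix.conjTranspose_eq_transpose_of_trivial, Matrix.toEuclideanLin_conjTranspose_eq_adjoint]

/-- Spectral norm: under RIC with parameters `(2n, ε)`, `ε ∈ (0,1)`, for every `z ∈ ℝ^N`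
and every index set `I` with `|I| ≤ 2n`, one has `‖(Φ*z)|_I‖₂ ≤ (1+ε)‖z‖₂`. -/
theorem spectral_norm_bound {N d n : ℕ} (Φ : Matrix (Fin N) (Fin d) ℝ)
    (ε : ℝ) (hε : ε ∈ Set.Ioo (0 : ℝ) 1) (hΦ : RIC Φ (2 * n) ε)
    (z : EuclideanSpace ℝ (Fin N)) (I : Finset (Fin d)) (hI : I.card ≤ 2 * n) :
    ‖restr I (Matrix.toEuclideanLin Φ.transpose z)‖ ≤ (1 + ε) * ‖z‖ := by
  rw [Matrix.toEuclideanLin_transpose_eq_adjoint]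
  exact norm_le_mul_norm_of_inner_adjoint_eq_norm_sq (by linarith [hε.1])
    (inner_restr_self I _) (hΦ _ (msparse_restr hI _)).2
end
end

section
/- Assume the N×d real matrix Φ satisfies the Restricted Isometry Condition with parameters (2n, ε), where 0 < ε ≤ 0.03. Then for every index set Γ ⊆ {1,…,d} with |Γ| ≤ 2n and every vector y ∈ ℝ^d supported in Γ, one has ‖(Φ*Φy)|_Γ − y‖₂ ≤ 2.03 ε ‖y‖₂; equivalently, the restricted Gram operator Φ_Γ*Φ_Γ differs from the identity on ℝ^Γ by at most 2.03 ε in operator norm. -/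
/-!
Put `z = (Φ*Φy)|_Γ - y`. Both `z` and `y` are supported in `Γ`, so restricting to `Γ` does not
change inner products with `z`, and `‖z‖² = ⟨Φz, Φy⟩ - ⟨z, y⟩`. On vectors supported in `Γ`, RIC
gives `|‖Φv‖² - ‖v‖²| ≤ 2.03 ε ‖v‖²`; polarization and homogeneity upgrade this to
`|⟨Φu, Φv⟩ - ⟨u, v⟩| ≤ 2.03 ε ‖u‖ ‖v‖`. Hence `‖z‖² ≤ 2.03 ε ‖z‖ ‖y‖`.
-/

open Finset

noncomputable section

open scoped RealInnerProductSpace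

section Polarization

variable {E F : Type*} [NormedAddCommGroup E] [InnerProductSpace ℝ E]
  [NormedAddCommGroup F] [InnerProductSpace ℝ F]

theorem abs_inner_map_sub_inner_le_of_sq_norm {T : E →ₗ[ℝ] F} {K : Submodule ℝ E} {δ : ℝ}
    (hT : ∀ v ∈ K, |‖T v‖ ^ 2 - ‖v‖ ^ 2| ≤ δ * ‖v‖ ^ 2) {u v : E} (hu : u ∈ K) (hv : v ∈ K) :
    |⟪T u, T v⟫ - ⟪u, v⟫| ≤ δ * ((‖u‖ ^ 2 + ‖v‖ ^ 2) / 2) := by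
  have hadd := abs_le.mp (hT (u + v) (K.add_mem hu hv))
  have hsub := abs_le.mp (hT (u - v) (K.sub_mem hu hv))
  have hpar : δ * ‖u + v‖ ^ 2 + δ * ‖u - v‖ ^ 2 = 2 * δ * (‖u‖ ^ 2 + ‖v‖ ^ 2) := by
    rw [norm_add_sq_real, norm_sub_sq_real]; ring
  have hpol : ⟪u, v⟫ = (‖u + v‖ ^ 2 - ‖u - v‖ ^ 2) / 4 := by
    rw [norm_add_sq_real, norm_sub_sq_real]; ring
  have hpolT : ⟪T u, T v⟫ = (‖T (u + v)‖ ^ 2 - ‖T (u - v)‖ ^ 2) / 4 := by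
    rw [map_add, map_sub, norm_add_sq_real, norm_sub_sq_real]; ring
  rw [hpol, hpolT, abs_le]
  constructor <;> linarith [hadd.1, hadd.2, hsub.1, hsub.2]

theorem abs_inner_map_sub_inner_le {T : E →ₗ[ℝ] F} {K : Submodule ℝ E} {δ : ℝ}
    (hT : ∀ v ∈ K, |‖T v‖ ^ 2 - ‖v‖ ^ 2| ≤ δ * ‖v‖ ^ 2) {u v : E} (hu : u ∈ K) (hv : v ∈ K) :
    |⟪T u, T v⟫ - ⟪u, v⟫| ≤ δ * (‖u‖ * ‖v‖) := by
  rcases eq_or_ne u 0 with rfl | hu0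
  · simp
  rcases eq_or_ne v 0 with rfl | hv0
  · simp
  have hunit_norm {w : E} (hw : w ≠ 0) : ‖‖w‖⁻¹ • w‖ = 1 := by
    rw [norm_smul, norm_inv, norm_norm, inv_mul_cancel₀ (norm_ne_zero_iff.mpr hw)]
  -- apply the averaged bound to the unit vectors `u / ‖u‖` and `v / ‖v‖`
  have hunit := abs_inner_map_sub_inner_le_of_sq_norm hT
    (K.smul_mem ‖u‖⁻¹ hu) (K.smul_mem ‖v‖⁻¹ hv)
  have hscale : ⟪T (‖u‖⁻¹ • u), T (‖v‖⁻¹ • v)⟫ - ⟪‖u‖⁻¹ • u, ‖v‖⁻¹ • v⟫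
      = (‖u‖ * ‖v‖)⁻¹ * (⟪T u, T v⟫ - ⟪u, v⟫) := by
    simp only [map_smul, real_inner_smul_left, real_inner_smul_right, mul_inv]; ring
  rw [hscale, hunit_norm hu0, hunit_norm hv0, abs_mul,
    abs_of_pos (by positivity), inv_mul_le_iff₀ (by positivity)] at hunit
  linarith

end Polarization

section Sparse

variable {d : ℕ}

def supportedIn (Γ : Finset (Fin d)) : Submodule ℝ (EuclideanSpace ℝ (Fin d)) where
  carrier := {v | ∀ i ∉ Γ, v i = 0}
  add_mem' hu hv i hi := by simp [hu i hi, hv i hi]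
  zero_mem' _ _ := rfl
  smul_mem' c v hv i hi := by simp [hv i hi]

theorem msparse_of_mem_supportedIn {m : ℕ} {Γ : Finset (Fin d)} (hΓ : Γ.card ≤ m)
    {v : EuclideanSpace ℝ (Fin d)} (hv : v ∈ supportedIn Γ) : msparse m v := by
  refine (card_le_card fun i hi => ?_).trans hΓ
  by_contra hiΓ
  exact (mem_filter.mp hi).2 (hv i hiΓ)

theorem restr_mem_supportedIn (Γ : Finset (Fin d)) (w : EuclideanSpace ℝ (Fin d)) :
    restr Γ w ∈ supportedIn Γ := fun i hi => by simp [restr, hi]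

theorem inner_restr_of_mem_supportedIn {Γ : Finset (Fin d)} {v : EuclideanSpace ℝ (Fin d)}
    (hv : v ∈ supportedIn Γ) (w : EuclideanSpace ℝ (Fin d)) : ⟪v, restr Γ w⟫ = ⟪v, w⟫ := by
  simp only [PiLp.inner_apply]
  refine sum_congr rfl fun i _ => ?_
  by_cases hi : i ∈ Γ
  · simp [restr, hi]
  · simp [hv i hi]

theorem inner_toEuclideanLin_transpose {N : ℕ} (Φ : Matrix (Fin N) (Fin d) ℝ)
    (x : EuclideanSpace ℝ (Fin d)) (w : EuclideanSpace ℝ (Fin N)) :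
    ⟪x, Matrix.toEuclideanLin Φ.transpose w⟫ = ⟪Matrix.toEuclideanLin Φ x, w⟫ := by
  rw [← Matrix.conjTranspose_eq_transpose_of_trivial,
    Matrix.toEuclideanLin_conjTranspose_eq_adjoint, LinearMap.adjoint_inner_right]

-- `ε ≤ 0.03` enters through `(1 + ε)² - 1 = 2ε + ε² ≤ 2.03 ε`.
theorem RIC.abs_sq_norm_apply_sub_sq_norm_le {N m : ℕ} {Φ : Matrix (Fin N) (Fin d) ℝ} {ε : ℝ}
    (hε : ε ≤ 0.03) (hΦ : RIC Φ m ε) {v : EuclideanSpace ℝ (Fin d)} (hv : msparse m v) :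
    |‖Matrix.toEuclideanLin Φ v‖ ^ 2 - ‖v‖ ^ 2| ≤ 2.03 * ε * ‖v‖ ^ 2 := by
  obtain ⟨hlower, hupper⟩ := hΦ v hv
  have hv0 := norm_nonneg v
  have hΦv0 := norm_nonneg (Matrix.toEuclideanLin Φ v)
  rw [abs_le]
  constructor <;> nlinarith [mul_le_mul hlower hlower (by nlinarith) hΦv0,
    mul_le_mul hupper hupper hΦv0 (by nlinarith)]

end Sparse

theorem restricted_gram_close_to_identity_general {N d n : ℕ} (Φ : Matrix (Fin N) (Fin d) ℝ)
    (ε : ℝ) (hε' : ε ≤ 0.03) (hΦ : RIC Φ (2 * n) ε)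
    (Γ : Finset (Fin d)) (hΓ : Γ.card ≤ 2 * n)
    (y : EuclideanSpace ℝ (Fin d)) (hy : ∀ i ∉ Γ, y i = 0) :
    ‖restr Γ (Matrix.toEuclideanLin Φ.transpose (Matrix.toEuclideanLin Φ y)) - y‖
      ≤ 2.03 * ε * ‖y‖ := by
  set T := Matrix.toEuclideanLin Φ
  set z := restr Γ (Matrix.toEuclideanLin Φ.transpose (T y)) - y
  have hyΓ : y ∈ supportedIn Γ := hy
  have hzΓ : z ∈ supportedIn Γ := sub_mem (restr_mem_supportedIn Γ _) hyΓ
  have hquad : ∀ v ∈ supportedIn Γ, |‖T v‖ ^ 2 - ‖v‖ ^ 2| ≤ 2.03 * ε * ‖v‖ ^ 2 :=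
    fun v hv => hΦ.abs_sq_norm_apply_sub_sq_norm_le hε' (msparse_of_mem_supportedIn hΓ hv)
  have hz_sq : ‖z‖ ^ 2 = ⟪T z, T y⟫ - ⟪z, y⟫ :=
    calc ‖z‖ ^ 2 = ⟪z, restr Γ (Matrix.toEuclideanLin Φ.transpose (T y)) - y⟫ :=
          (real_inner_self_eq_norm_sq z).symm
      _ = ⟪T z, T y⟫ - ⟪z, y⟫ := by
          rw [inner_sub_right, inner_restr_of_mem_supportedIn hzΓ, inner_toEuclideanLin_transpose]
  have hbilin := (le_abs_self _).trans (abs_inner_map_sub_inner_le hquad hzΓ hyΓ)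
  rw [← hz_sq] at hbilin
  have hbound : 0 ≤ 2.03 * ε * ‖y‖ := by
    have hδy := (abs_nonneg _).trans (hquad y hyΓ)
    rcases (norm_nonneg y).eq_or_lt with hy0 | hy0
    · rw [← hy0, mul_zero]
    · nlinarith
  nlinarith [norm_nonneg z]

/-- Under RIC with parameters `(2n, ε)`, `0 < ε ≤ 0.03`, for every index set `Γ` with
`|Γ| ≤ 2n` and every vector `y` supported in `Γ`, one has
`‖(Φ*Φy)|_Γ − y‖₂ ≤ 2.03 ε ‖y‖₂`. -/
theorem restricted_gram_close_to_identity {N d n : ℕ} (Φ : Matrix (Fin N) (Fin d) ℝ)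
    (ε : ℝ) (hε : 0 < ε) (hε' : ε ≤ 0.03) (hΦ : RIC Φ (2 * n) ε)
    (Γ : Finset (Fin d)) (hΓ : Γ.card ≤ 2 * n)
    (y : EuclideanSpace ℝ (Fin d)) (hy : ∀ i ∉ Γ, y i = 0) :
    ‖restr Γ (Matrix.toEuclideanLin Φ.transpose (Matrix.toEuclideanLin Φ y)) - y‖
      ≤ 2.03 * ε * ‖y‖ :=
  restricted_gram_close_to_identity_general Φ ε hε' hΦ Γ hΓ y hy
end
end

section
/- (Approximation of the residual.) Assume the N×d real matrix Φ satisfies the Restricted Isometry Condition with parameters (2n, ε), where 0 < ε ≤ 0.03. Let v ∈ ℝ^d be n-sparse and let I ⊆ {1,…,d} satisfy |supp(v) ∪ I| ≤ 2n. Set x = Φv, F = range(Φ_I), r = P_{F^⊥} x, v₀ = v|_{supp(v)∖I}, and x₀ = Φv₀. Then ‖x₀ − r‖₂ ≤ 2.2 ε ‖x₀‖₂. -/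
/-!
The vector `u = x₀ - r` lies in `F`: both `x - r = P_F x` and `x - x₀ = Φ (v - v₀)` do, the
latter because `v - v₀` is supported in `I`. As `r ⟂ F`, this gives `‖u‖² = ⟪x₀, u⟫`. Writing
`u = Φ y` with `supp y ⊆ I`, which is disjoint from `supp v₀`, the RIC makes `Φ v₀` and `Φ y`
nearly orthogonal, `|⟪Φ v₀, Φ y⟫| ≤ 2ε ‖v₀‖ ‖y‖` (polarization), while
`(1 - ε) ‖v₀‖ ≤ ‖x₀‖` and `(1 - ε) ‖y‖ ≤ ‖u‖`. Hence `(1 - ε)² ‖u‖ ≤ 2ε ‖x₀‖`, and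
`2 / (1 - ε)² ≤ 2.2` for `ε ≤ 0.03`.
-/

open Finset

noncomputable section

open RealInnerProductSpace

section

variable {N d : ℕ}

@[simp]
lemma mem_suppF {w : EuclideanSpace ℝ (Fin d)} {i : Fin d} : i ∈ suppF w ↔ w i ≠ 0 := by
  simp [suppF]

lemma msparse_of_suppF_subset {m : ℕ} {w : EuclideanSpace ℝ (Fin d)} {S : Finset (Fin d)}
    (hw : suppF w ⊆ S) (hS : S.card ≤ m) : msparse m w :=
  (card_le_card hw).trans hS

lemma suppF_add_subset (a b : EuclideanSpace ℝ (Fin d)) :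
    suppF (a + b) ⊆ suppF a ∪ suppF b := by
  intro i
  simp only [mem_suppF, mem_union, PiLp.add_apply]
  contrapose!
  rintro ⟨ha, hb⟩
  simp [ha, hb]

lemma suppF_sub_subset (a b : EuclideanSpace ℝ (Fin d)) :
    suppF (a - b) ⊆ suppF a ∪ suppF b := by
  intro i
  simp only [mem_suppF, mem_union, PiLp.sub_apply]
  contrapose!
  rintro ⟨ha, hb⟩
  simp [ha, hb]

lemma suppF_smul_subset (c : ℝ) (a : EuclideanSpace ℝ (Fin d)) : suppF (c • a) ⊆ suppF a := by
  intro i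
  simp only [mem_suppF, PiLp.smul_apply, smul_eq_mul]
  exact right_ne_zero_of_mul

lemma suppF_restr_subset (S : Finset (Fin d)) (w : EuclideanSpace ℝ (Fin d)) :
    suppF (restr S w) ⊆ S := by
  intro i
  simp only [mem_suppF, restr]
  split_ifs with h <;> simp [h]

lemma suppF_sub_restr_subset (S : Finset (Fin d)) (w : EuclideanSpace ℝ (Fin d)) :
    suppF (w - restr S w) ⊆ suppF w \ S := by
  intro i
  simp only [mem_suppF, mem_sdiff, restr, PiLp.sub_apply]
  split_ifs with h <;> simp [h]

lemma inner_eq_zero_of_disjoint_suppF {a b : EuclideanSpace ℝ (Fin d)}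
    (hab : Disjoint (suppF a) (suppF b)) : ⟪a, b⟫ = 0 := by
  refine Finset.sum_eq_zero fun i _ => ?_
  by_cases ha : a i = 0
  · simp [ha]
  · have hb : b i = 0 := by
      by_contra hb
      exact disjoint_left.mp hab (mem_suppF.mpr ha) (mem_suppF.mpr hb)
    simp [hb]

lemma toEuclideanLin_single_one (Φ : Matrix (Fin N) (Fin d) ℝ) (j : Fin d) :
    Matrix.toEuclideanLin Φ (EuclideanSpace.single j 1) = WithLp.toLp 2 (fun i => Φ i j) := by
  ext i
  simp [Matrix.toLpLin_apply]

lemma mem_colSpan_iff {Φ : Matrix (Fin N) (Fin d) ℝ} {S : Finset (Fin d)}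
    {p : EuclideanSpace ℝ (Fin N)} :
    p ∈ colSpan Φ S ↔ ∃ w, suppF w ⊆ S ∧ Matrix.toEuclideanLin Φ w = p := by
  have hspan : colSpan Φ S = (Submodule.span ℝ
      ((EuclideanSpace.basisFun (Fin d) ℝ).toBasis '' (S : Set (Fin d)))).map
        (Matrix.toEuclideanLin Φ) := by
    simp only [colSpan, Submodule.map_span, Set.image_image, OrthonormalBasis.coe_toBasis,
      EuclideanSpace.basisFun_apply, toEuclideanLin_single_one]
  rw [hspan, Submodule.mem_map]
  refine exists_congr fun w => and_congr_left fun _ => ?_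
  rw [Module.Basis.mem_span_image]
  simp [Set.subset_def, Finset.subset_iff]

namespace RIC

variable {Φ : Matrix (Fin N) (Fin d) ℝ} {m : ℕ} {ε : ℝ}

lemma abs_inner_le (hΦ : RIC Φ m ε) (hε : ε ≤ 1) {a b : EuclideanSpace ℝ (Fin d)}
    (hab : Disjoint (suppF a) (suppF b)) (hcard : (suppF a ∪ suppF b).card ≤ m) :
    |⟪Matrix.toEuclideanLin Φ a, Matrix.toEuclideanLin Φ b⟫| ≤ ε * (‖a‖ ^ 2 + ‖b‖ ^ 2) := by
  have hab0 := inner_eq_zero_of_disjoint_suppF hab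
  obtain ⟨hloAdd, hhiAdd⟩ := hΦ (a + b) (msparse_of_suppF_subset (suppF_add_subset a b) hcard)
  obtain ⟨hloSub, hhiSub⟩ := hΦ (a - b) (msparse_of_suppF_subset (suppF_sub_subset a b) hcard)
  have hsqAdd : ‖a + b‖ ^ 2 = ‖a‖ ^ 2 + ‖b‖ ^ 2 := by rw [norm_add_sq_real, hab0]; ring
  have hsqSub : ‖a - b‖ ^ 2 = ‖a‖ ^ 2 + ‖b‖ ^ 2 := by rw [norm_sub_sq_real, hab0]; ring
  rw [map_add] at hloAdd hhiAdd
  rw [map_sub] at hloSub hhiSub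
  set A := Matrix.toEuclideanLin Φ a
  set B := Matrix.toEuclideanLin Φ b
  have hpol : ‖A + B‖ ^ 2 - ‖A - B‖ ^ 2 = 4 * ⟪A, B⟫ := by
    rw [norm_add_sq_real, norm_sub_sq_real]; ring
  have h1ε : 0 ≤ 1 - ε := by linarith
  have hloAdd2 := pow_le_pow_left₀ (mul_nonneg h1ε (norm_nonneg _)) hloAdd 2
  have hloSub2 := pow_le_pow_left₀ (mul_nonneg h1ε (norm_nonneg _)) hloSub 2
  have hhiAdd2 := pow_le_pow_left₀ (norm_nonneg _) hhiAdd 2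
  have hhiSub2 := pow_le_pow_left₀ (norm_nonneg _) hhiSub 2
  rw [mul_pow, hsqAdd] at hloAdd2 hhiAdd2
  rw [mul_pow, hsqSub] at hloSub2 hhiSub2
  rw [abs_le]
  constructor <;> linarith

lemma abs_inner_le_mul (hΦ : RIC Φ m ε) (hε : ε ≤ 1) {a b : EuclideanSpace ℝ (Fin d)}
    (hab : Disjoint (suppF a) (suppF b)) (hcard : (suppF a ∪ suppF b).card ≤ m) :
    |⟪Matrix.toEuclideanLin Φ a, Matrix.toEuclideanLin Φ b⟫| ≤ 2 * ε * ‖a‖ * ‖b‖ := by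
  rcases eq_or_ne a 0 with rfl | ha
  · simp
  rcases eq_or_ne b 0 with rfl | hb
  · simp
  have hunit := hΦ.abs_inner_le hε (a := ‖a‖⁻¹ • a) (b := ‖b‖⁻¹ • b)
    (hab.mono (suppF_smul_subset _ _) (suppF_smul_subset _ _))
    ((card_le_card (union_subset_union (suppF_smul_subset _ _) (suppF_smul_subset _ _))).trans
      hcard)
  have hna : 0 < ‖a‖ := norm_pos_iff.mpr ha
  have hnb : 0 < ‖b‖ := norm_pos_iff.mpr hb
  have hnorm (c : EuclideanSpace ℝ (Fin d)) (hc : 0 < ‖c‖) : ‖‖c‖⁻¹ • c‖ = 1 := by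
    rw [norm_smul, norm_inv, norm_norm, inv_mul_cancel₀ hc.ne']
  rw [hnorm a hna, hnorm b hnb, map_smul, map_smul, real_inner_smul_left, real_inner_smul_right,
    ← mul_assoc, abs_mul, abs_of_pos (by positivity)] at hunit
  rw [← le_div_iff₀' (by positivity)] at hunit
  calc _ ≤ ε * (1 ^ 2 + 1 ^ 2) / (‖a‖⁻¹ * ‖b‖⁻¹) := hunit
    _ = 2 * ε * ‖a‖ * ‖b‖ := by field_simp; ring

end RIC

end

section Projection

variable {E : Type*} [NormedAddCommGroup E] [InnerProductSpace ℝ E] (K : Submodule ℝ E)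

lemma sub_starProjection_orthogonal_mem [K.HasOrthogonalProjection] {x x₀ : E} (h : x - x₀ ∈ K) :
    x₀ - Kᗮ.starProjection x ∈ K := by
  rw [Submodule.starProjection_orthogonal_val]
  convert K.sub_mem (K.starProjection_apply_mem x) h using 1
  abel

lemma inner_sub_eq_norm_sq_of_mem_orthogonal {x₀ r : E} (hu : x₀ - r ∈ K) (hr : r ∈ Kᗮ) :
    ⟪x₀, x₀ - r⟫ = ‖x₀ - r‖ ^ 2 := by
  rw [← real_inner_self_eq_norm_sq, inner_sub_left, (K.mem_orthogonal' r).mp hr _ hu, sub_zero]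

end Projection

lemma one_sub_sq_mul_le_of_sq_le {ε U X a b : ℝ} (hε : 0 ≤ ε) (hε1 : ε ≤ 1) (hb : 0 ≤ b)
    (hX : 0 ≤ X) (hU : 0 ≤ U) (hUab : U ^ 2 ≤ 2 * ε * a * b) (haX : (1 - ε) * a ≤ X)
    (hbU : (1 - ε) * b ≤ U) : (1 - ε) ^ 2 * U ≤ 2 * ε * X := by
  rcases hU.eq_or_lt with rfl | hU
  · rw [mul_zero]; positivity
  have hab : (1 - ε) * a * ((1 - ε) * b) ≤ X * U :=
    mul_le_mul haX hbU (mul_nonneg (by linarith) hb) hX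
  refine le_of_mul_le_mul_right ?_ hU
  calc (1 - ε) ^ 2 * U * U ≤ (1 - ε) ^ 2 * (2 * ε * a * b) := by
        rw [mul_assoc, ← sq]; gcongr
    _ = 2 * ε * ((1 - ε) * a * ((1 - ε) * b)) := by ring
    _ ≤ 2 * ε * (X * U) := by gcongr
    _ = 2 * ε * X * U := by ring

theorem approximation_of_residual_general {N d n : ℕ} (Φ : Matrix (Fin N) (Fin d) ℝ)
    (ε : ℝ) (hε : 0 < ε) (hε' : ε ≤ 0.03) (hΦ : RIC Φ (2 * n) ε)
    (v : EuclideanSpace ℝ (Fin d))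
    (I : Finset (Fin d)) (hI : (suppF v ∪ I).card ≤ 2 * n)
    (x r x₀ : EuclideanSpace ℝ (Fin N)) (v₀ : EuclideanSpace ℝ (Fin d))
    (hx : x = Matrix.toEuclideanLin Φ v)
    (hr : r = (Submodule.orthogonalProjection (colSpan Φ I)ᗮ x : EuclideanSpace ℝ (Fin N)))
    (hv₀ : v₀ = restr (suppF v \ I) v)
    (hx₀ : x₀ = Matrix.toEuclideanLin Φ v₀) :
    ‖x₀ - r‖ ≤ 2.2 * ε * ‖x₀‖ := by
  set F := colSpan Φ I
  have hε1 : ε ≤ 1 := by linarith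
  have hv₀I : suppF v₀ ⊆ suppF v \ I := hv₀ ▸ suppF_restr_subset _ v
  have hvv₀I : suppF (v - v₀) ⊆ I := by
    rw [hv₀]
    calc suppF (v - restr (suppF v \ I) v) ⊆ suppF v \ (suppF v \ I) := suppF_sub_restr_subset _ v
      _ = suppF v ∩ I := sdiff_sdiff_self_left _ _
      _ ⊆ I := inter_subset_right
  have hxx₀ : x - x₀ ∈ F := mem_colSpan_iff.mpr ⟨v - v₀, hvv₀I, by rw [map_sub, hx, hx₀]⟩
  replace hr : r = Fᗮ.starProjection x := hr
  have hu : x₀ - r ∈ F := hr ▸ sub_starProjection_orthogonal_mem F hxx₀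
  have hsq : ‖x₀ - r‖ ^ 2 = ⟪x₀, x₀ - r⟫ :=
    (inner_sub_eq_norm_sq_of_mem_orthogonal F hu (hr ▸ Fᗮ.starProjection_apply_mem x)).symm
  obtain ⟨y, hyI, hy⟩ := mem_colSpan_iff.mp hu
  have hsupp : (suppF v₀ ∪ suppF y) ⊆ suppF v ∪ I :=
    union_subset_union (hv₀I.trans sdiff_subset) hyI
  have hinner : ‖x₀ - r‖ ^ 2 ≤ 2 * ε * ‖v₀‖ * ‖y‖ := by
    rw [hsq, ← hy, hx₀]
    exact (le_abs_self _).trans (hΦ.abs_inner_le_mul hε1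
      (disjoint_sdiff_self_left.mono hv₀I hyI) ((card_le_card hsupp).trans hI))
  have hv₀lo : (1 - ε) * ‖v₀‖ ≤ ‖x₀‖ :=
    hx₀ ▸ (hΦ v₀ (msparse_of_suppF_subset (subset_union_left.trans hsupp) hI)).1
  have hylo : (1 - ε) * ‖y‖ ≤ ‖x₀ - r‖ :=
    hy ▸ (hΦ y (msparse_of_suppF_subset (subset_union_right.trans hsupp) hI)).1
  have key := one_sub_sq_mul_le_of_sq_le hε.le hε1 (norm_nonneg y) (norm_nonneg x₀)
    (norm_nonneg _) hinner hv₀lo hylo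
  have hconst : 2 ≤ 2.2 * (1 - ε) ^ 2 := by nlinarith
  nlinarith [mul_le_mul_of_nonneg_right hconst (norm_nonneg (x₀ - r))]

/-- Approximation of the residual: under RIC with parameters `(2n, ε)`, `0 < ε ≤ 0.03`,
for an `n`-sparse `v` and a set `I` with `|supp(v) ∪ I| ≤ 2n`, setting `x = Φv`,
`F = range(Φ_I)`, `r = P_{F^⊥} x`, `v₀ = v|_{supp(v)∖I}`, `x₀ = Φv₀`, one has
`‖x₀ − r‖₂ ≤ 2.2 ε ‖x₀‖₂`. -/
theorem approximation_of_residual {N d n : ℕ} (Φ : Matrix (Fin N) (Fin d) ℝ)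
    (ε : ℝ) (hε : 0 < ε) (hε' : ε ≤ 0.03) (hΦ : RIC Φ (2 * n) ε)
    (v : EuclideanSpace ℝ (Fin d)) (hv : msparse n v)
    (I : Finset (Fin d)) (hI : (suppF v ∪ I).card ≤ 2 * n)
    (x r x₀ : EuclideanSpace ℝ (Fin N)) (v₀ : EuclideanSpace ℝ (Fin d))
    (hx : x = Matrix.toEuclideanLin Φ v)
    (hr : r = (Submodule.orthogonalProjection (colSpan Φ I)ᗮ x : EuclideanSpace ℝ (Fin N)))
    (hv₀ : v₀ = restr (suppF v \ I) v)
    (hx₀ : x₀ = Matrix.toEuclideanLin Φ v₀) :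
    ‖x₀ - r‖ ≤ 2.2 * ε * ‖x₀‖ :=
  approximation_of_residual_general Φ ε hε hε' hΦ v I hI x r x₀ v₀ hx hr hv₀ hx₀
end
end
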